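/- arXiv:0907.4418 — 3 statements merged into one kernel-verified Lean document; each statement's English description precedes it below -/
import Mathlib

section
/- Let Ô be a p×r real matrix with ÔᵀÔ = I_r, let K̂ be an r×q real matrix admitting a right inverse K̂† (a q×r matrix with K̂K̂† = I_r), let O be a p×n real matrix and K an n×q real matrix, and set E = OK − ÔK̂. Then for every unit vector u ∈ ℝʳ, ‖uᵀÔᵀO‖ · ‖KK̂†‖ ≥ 1 − ‖E‖ · ‖K̂†‖, where ‖·‖ denotes the Euclidean norm for vectors and the induced operator norm for matrices. -/
open Matrix

/-- The Euclidean norm of a vector in `ℝⁿ`. -/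
noncomputable def evNorm {n : ℕ} (v : Fin n → ℝ) : ℝ := Real.sqrt (∑ i, v i ^ 2)

/-- The operator norm of a real matrix induced by the Euclidean norms. -/
noncomputable def opNorm {p q : ℕ} (A : Matrix (Fin p) (Fin q) ℝ) : ℝ :=
  ‖(Matrix.toEuclideanLin A).toContinuousLinearMap‖

open scoped Matrix.Norms.L2Operator

lemma evNorm_eq {n : ℕ} (v : Fin n → ℝ) :
    evNorm v = ‖(EuclideanSpace.equiv (Fin n) ℝ).symm v‖ := by
  rw [evNorm, EuclideanSpace.norm_eq]
  congr 1
  refine Finset.sum_congr rfl fun i _ => ?_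
  simp [sq_abs]

lemma opNorm_eq {p q : ℕ} (A : Matrix (Fin p) (Fin q) ℝ) : opNorm A = ‖A‖ := rfl

lemma evNorm_nonneg {n : ℕ} (v : Fin n → ℝ) : 0 ≤ evNorm v := Real.sqrt_nonneg _

lemma opNorm_nonneg {p q : ℕ} (A : Matrix (Fin p) (Fin q) ℝ) : 0 ≤ opNorm A :=
  norm_nonneg _

lemma evNorm_sub_le {n : ℕ} (a b : Fin n → ℝ) :
    evNorm (a - b) ≤ evNorm a + evNorm b := by
  rw [evNorm_eq, evNorm_eq, evNorm_eq, map_sub]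
  exact norm_sub_le _ _

lemma evNorm_vecMul_le {m n : ℕ} (v : Fin m → ℝ) (A : Matrix (Fin m) (Fin n) ℝ) :
    evNorm (v ᵥ* A) ≤ evNorm v * opNorm A := by
  have ht : Aᴴ = Aᵀ := by ext i j; simp [conjTranspose_apply]
  have hnt : ‖Aᵀ‖ = ‖A‖ := by rw [← ht]; exact Matrix.l2_opNorm_conjTranspose A
  have h := Matrix.l2_opNorm_mulVec Aᵀ ((EuclideanSpace.equiv (Fin m) ℝ).symm v)
  rw [evNorm_eq, evNorm_eq, ← Matrix.mulVec_transpose, opNorm_eq, ← hnt, mul_comm]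
  exact h

theorem claim4_inequality {p r q n : ℕ}
    (Ohat : Matrix (Fin p) (Fin r) ℝ) (Khat : Matrix (Fin r) (Fin q) ℝ)
    (Kdag : Matrix (Fin q) (Fin r) ℝ)
    (O : Matrix (Fin p) (Fin n) ℝ) (K : Matrix (Fin n) (Fin q) ℝ)
    (hO : Ohatᵀ * Ohat = 1) (hK : Khat * Kdag = 1) :
    ∀ u : Fin r → ℝ, evNorm u = 1 →
      evNorm (u ᵥ* (Ohatᵀ * O)) * opNorm (K * Kdag)
        ≥ 1 - opNorm (O * K - Ohat * Khat) * opNorm Kdag := by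
  intro u hu
  set E : Matrix (Fin p) (Fin q) ℝ := O * K - Ohat * Khat with hE
  -- matrix identity
  have hid : (Ohatᵀ * O) * (K * Kdag) - (Ohatᵀ * E) * Kdag = 1 := by
    rw [hE]
    rw [Matrix.mul_sub, Matrix.sub_mul]
    rw [show Ohatᵀ * (Ohat * Khat) * Kdag = (Ohatᵀ * Ohat) * (Khat * Kdag) by
      simp [Matrix.mul_assoc]]
    rw [hO, hK]
    simp [Matrix.mul_assoc]
  have hu_eq : u = u ᵥ* ((Ohatᵀ * O) * (K * Kdag)) - u ᵥ* ((Ohatᵀ * E) * Kdag) := by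
    rw [← Matrix.vecMul_sub, hid, Matrix.vecMul_one]
  -- norm of u ᵥ* Ohatᵀ is 1
  have hOu : evNorm (u ᵥ* Ohatᵀ) = 1 := by
    have h1 : ∀ (m : ℕ) (v : Fin m → ℝ), ∑ i, v i ^ 2 = v ⬝ᵥ v := by
      intro m v
      simp [dotProduct, sq]
    have h2 : (u ᵥ* Ohatᵀ) ⬝ᵥ (u ᵥ* Ohatᵀ) = u ⬝ᵥ u := by
      rw [Matrix.vecMul_transpose]
      rw [Matrix.dotProduct_mulVec, Matrix.vecMul_mulVec, hO,
        Matrix.vecMul_one]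
    have : evNorm (u ᵥ* Ohatᵀ) = evNorm u := by
      rw [evNorm, evNorm, h1, h1, h2]
    rw [this, hu]
  -- bounds
  have b1 : evNorm (u ᵥ* ((Ohatᵀ * O) * (K * Kdag)))
      ≤ evNorm (u ᵥ* (Ohatᵀ * O)) * opNorm (K * Kdag) := by
    rw [← Matrix.vecMul_vecMul]
    exact evNorm_vecMul_le _ _
  have b2 : evNorm (u ᵥ* ((Ohatᵀ * E) * Kdag)) ≤ opNorm E * opNorm Kdag := by
    calc evNorm (u ᵥ* ((Ohatᵀ * E) * Kdag))
        ≤ evNorm (u ᵥ* (Ohatᵀ * E)) * opNorm Kdag := by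
          rw [← Matrix.vecMul_vecMul]; exact evNorm_vecMul_le _ _
      _ ≤ (evNorm (u ᵥ* Ohatᵀ) * opNorm E) * opNorm Kdag := by
          apply mul_le_mul_of_nonneg_right _ (opNorm_nonneg _)
          rw [← Matrix.vecMul_vecMul]
          exact evNorm_vecMul_le _ _
      _ = opNorm E * opNorm Kdag := by rw [hOu, one_mul]
  have key : (1 : ℝ) ≤ evNorm (u ᵥ* (Ohatᵀ * O)) * opNorm (K * Kdag)
      + opNorm E * opNorm Kdag := by
    calc (1 : ℝ) = evNorm (u ᵥ* ((Ohatᵀ * O) * (K * Kdag))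
          - u ᵥ* ((Ohatᵀ * E) * Kdag)) := by rw [← hu_eq, hu]
      _ ≤ evNorm (u ᵥ* ((Ohatᵀ * O) * (K * Kdag)))
          + evNorm (u ᵥ* ((Ohatᵀ * E) * Kdag)) := evNorm_sub_le _ _
      _ ≤ _ := add_le_add b1 b2
  linarith
end

section
/- Let V be a real inner product space, let w ∈ V, and let a ∈ ℝ and x₂ ∈ V satisfy a² + ‖x₂‖² = 1. Then a² + ‖a·w + x₂‖² ≥ min(1/2, 1/(16‖w‖² + 1)). -/
theorem claim5_quadratic_lower_bound {V : Type*} [NormedAddCommGroup V]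
    [InnerProductSpace ℝ V] (w x₂ : V) (a : ℝ) (h : a ^ 2 + ‖x₂‖ ^ 2 = 1) :
    a ^ 2 + ‖a • w + x₂‖ ^ 2 ≥ min (1 / 2) (1 / (16 * ‖w‖ ^ 2 + 1)) := by
  have ht : (0:ℝ) ≤ ‖w‖ := norm_nonneg w
  have hv : (0:ℝ) ≤ ‖x₂‖ := norm_nonneg x₂
  have hu : (0:ℝ) ≤ |a| := abs_nonneg a
  have ha2 : a ^ 2 = |a| ^ 2 := (sq_abs a).symm
  have key : (‖x₂‖ - |a| * ‖w‖) ^ 2 ≤ ‖a • w + x₂‖ ^ 2 := by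
    have h1 : |‖x₂‖ - ‖-(a • w)‖| ≤ ‖x₂ - (-(a • w))‖ := abs_norm_sub_norm_le _ _
    rw [norm_neg, norm_smul, sub_neg_eq_add, add_comm] at h1
    simp only [Real.norm_eq_abs] at h1
    calc (‖x₂‖ - |a| * ‖w‖) ^ 2 = |‖x₂‖ - |a| * ‖w‖| ^ 2 := (sq_abs _).symm
      _ ≤ ‖a • w + x₂‖ ^ 2 := by
          apply pow_le_pow_left₀ (abs_nonneg _) h1
  rcases le_total ‖w‖ (1/15) with hw | hw
  · refine le_trans (min_le_left _ _) ?_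
    have hw2 : ‖w‖ ^ 2 ≤ 1/225 := by nlinarith
    nlinarith [key, sq_nonneg (|a| - ‖x₂‖), sq_nonneg (|a| + ‖x₂‖), sq_nonneg (|a| * ‖w‖), mul_nonneg (mul_nonneg hu ht) hv]
  · refine le_trans (min_le_right _ _) ?_
    have hpos : (0:ℝ) < 16 * ‖w‖ ^ 2 + 1 := by positivity
    rw [div_le_iff₀ hpos]
    have h1 : |a| ^ 2 + ‖x₂‖ ^ 2 = 1 := by rw [← ha2]; exact h
    calc 1 ≤ (|a| ^ 2 + (‖x₂‖ - |a| * ‖w‖) ^ 2) * (16 * ‖w‖ ^ 2 + 1) := by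
          nlinarith [sq_nonneg (16 * ‖w‖ ^ 2 * ‖x₂‖ - ‖w‖ * (16 * ‖w‖ ^ 2 + 1) * |a|),
            sq_nonneg ‖w‖, sq_nonneg (|a| * ‖w‖),
            mul_pos (show (0:ℝ) < ‖w‖ by linarith) (show (0:ℝ) < ‖w‖ by linarith),
            sq_nonneg (‖w‖ - 1/15), mul_nonneg (mul_nonneg hu hu) (sq_nonneg ‖w‖)]
      _ ≤ (a ^ 2 + ‖a • w + x₂‖ ^ 2) * (16 * ‖w‖ ^ 2 + 1) :=
          mul_le_mul_of_nonneg_right (by nlinarith [key]) hpos.le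
end

section
/- Let Uₙ be an n×(n−1) real matrix with UₙᵀUₙ = I_{n−1} and UₙUₙᵀ = Iₙ − (1/n)1ₙ1ₙᵀ, and let U_ℓ be an ℓ×(ℓ−1) real matrix with U_ℓᵀU_ℓ = I_{ℓ−1} and U_ℓU_ℓᵀ = I_ℓ − (1/ℓ)1_ℓ1_ℓᵀ. Let A be an n×n real matrix with 1ₙᵀA = 1ₙᵀ, let S be an n×n real matrix with S·1ₙ = 0 and 1ₙᵀS = 0, and let C be an ℓ×n real matrix with 1_ℓᵀC = 1ₙᵀ. Define Ã = UₙᵀAUₙ, S̃ = UₙᵀSUₙ and C̃ = U_ℓᵀCUₙ. Then for all integers i, j ≥ 0, C̃ÃʲS̃(Ãᵀ)ⁱC̃ᵀ = U_ℓᵀ(CAʲS(Aᵀ)ⁱCᵀ)U_ℓ. -/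
open Matrix

theorem compressed_system_covariances {n ℓ : ℕ}
    (Un : Matrix (Fin n) (Fin (n - 1)) ℝ) (Ul : Matrix (Fin ℓ) (Fin (ℓ - 1)) ℝ)
    (A S : Matrix (Fin n) (Fin n) ℝ) (C : Matrix (Fin ℓ) (Fin n) ℝ)
    (hUn1 : Unᵀ * Un = 1)
    (hUn2 : Un * Unᵀ = 1 - ((1 : ℝ) / n) • Matrix.of (fun _ _ => (1:ℝ)))
    (hUl1 : Ulᵀ * Ul = 1)
    (hUl2 : Ul * Ulᵀ = 1 - ((1 : ℝ) / ℓ) • Matrix.of (fun _ _ => (1:ℝ)))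
    (hA : (fun _ => (1:ℝ)) ᵥ* A = fun _ => (1:ℝ))
    (hS1 : S *ᵥ (fun _ => 1) = 0)
    (h1S : (fun _ => (1:ℝ)) ᵥ* S = 0)
    (hC : (fun _ => (1:ℝ)) ᵥ* C = fun _ => (1:ℝ)) :
    ∀ i j : ℕ,
      (Ulᵀ * C * Un) * (Unᵀ * A * Un) ^ j * (Unᵀ * S * Un)
          * ((Unᵀ * A * Un)ᵀ) ^ i * (Ulᵀ * C * Un)ᵀ
        = Ulᵀ * (C * A ^ j * S * (Aᵀ) ^ i * Cᵀ) * Ul := by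
  intro i j
  set J : Matrix (Fin n) (Fin n) ℝ := Matrix.of (fun _ _ => (1:ℝ)) with hJdef
  -- basic facts about J
  have hJA : J * A = J := by
    ext a b
    have := congrFun hA b
    simp [Matrix.mul_apply, Matrix.vecMul, dotProduct, hJdef] at this ⊢
    simpa using this
  have hJS : J * S = 0 := by
    ext a b
    have := congrFun h1S b
    simp [Matrix.mul_apply, Matrix.vecMul, dotProduct, hJdef] at this ⊢
    simpa using this
  have hSJ : S * J = 0 := by
    ext a b
    have := congrFun hS1 a
    simp [Matrix.mul_apply, Matrix.mulVec, dotProduct, hJdef] at this ⊢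
    simpa using this
  have hJT : Jᵀ = J := by
    ext a b; simp [hJdef]
  have hAtJ : Aᵀ * J = J := by
    have := congrArg Matrix.transpose hJA
    simpa [Matrix.transpose_mul, hJT] using this
  have hJApow : ∀ k, J * A ^ k = J := by
    intro k
    induction k with
    | zero => simp
    | succ k ih => rw [pow_succ, ← Matrix.mul_assoc, ih, hJA]
  -- projection facts
  have hPr : ∀ {m : ℕ} (Y : Matrix (Fin n) (Fin m) ℝ), J * Y = 0 →
      Un * (Unᵀ * Y) = Y := by
    intro m Y h
    rw [← Matrix.mul_assoc, hUn2, Matrix.sub_mul, Matrix.one_mul,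
      Matrix.smul_mul, h, smul_zero, sub_zero]
  have hP' : ∀ X : Matrix (Fin n) (Fin n) ℝ, X * J = 0 → X * (Un * Unᵀ) = X := by
    intro X h
    rw [hUn2, Matrix.mul_sub, Matrix.mul_one, Matrix.mul_smul, h, smul_zero, sub_zero]
  have hPl0 : ∀ (X : Matrix (Fin n) (Fin n) ℝ), X * J = 0 →
      ∀ {m : ℕ} (Z : Matrix (Fin n) (Fin m) ℝ), X * (Un * (Unᵀ * Z)) = X * Z := by
    intro X hX m Z
    rw [← Matrix.mul_assoc, ← Matrix.mul_assoc, Matrix.mul_assoc X Un Unᵀ, hP' X hX]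
  -- main inductions
  have main1 : ∀ {m : ℕ} (Y : Matrix (Fin n) (Fin m) ℝ), J * Y = 0 →
      ∀ k, (Unᵀ * (A * Un)) ^ k * (Unᵀ * Y) = Unᵀ * (A ^ k * Y) := by
    intro m Y hY k
    induction k with
    | zero => simp
    | succ k ih =>
      have h0 : J * (A ^ k * Y) = 0 := by rw [← Matrix.mul_assoc, hJApow, hY]
      calc (Unᵀ * (A * Un)) ^ (k+1) * (Unᵀ * Y)
          = (Unᵀ * (A * Un)) * (Unᵀ * (A ^ k * Y)) := by
            rw [pow_succ', Matrix.mul_assoc, ih]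
        _ = Unᵀ * (A * (Un * (Unᵀ * (A ^ k * Y)))) := by
            simp only [Matrix.mul_assoc]
        _ = Unᵀ * (A * (A ^ k * Y)) := by rw [hPr _ h0]
        _ = Unᵀ * (A ^ (k+1) * Y) := by rw [pow_succ', Matrix.mul_assoc]
  have main2 : ∀ (k : ℕ) {m : ℕ} (W : Matrix (Fin n) (Fin m) ℝ)
      (X : Matrix (Fin n) (Fin n) ℝ), X * J = 0 →
      X * (Un * ((Unᵀ * (Aᵀ * Un)) ^ k * (Unᵀ * W))) = X * ((Aᵀ) ^ k * W) := by
    intro k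
    induction k with
    | zero =>
      intro m W X hX
      simpa using hPl0 X hX W
    | succ k ih =>
      intro m W X hX
      have hX' : (X * Aᵀ) * J = 0 := by rw [Matrix.mul_assoc, hAtJ, hX]
      calc X * (Un * ((Unᵀ * (Aᵀ * Un)) ^ (k+1) * (Unᵀ * W)))
          = X * (Un * (Unᵀ * (Aᵀ * (Un * ((Unᵀ * (Aᵀ * Un)) ^ k * (Unᵀ * W)))))) := by
            rw [pow_succ']
            simp only [Matrix.mul_assoc]
        _ = X * (Aᵀ * (Un * ((Unᵀ * (Aᵀ * Un)) ^ k * (Unᵀ * W)))) := by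
            rw [hPl0 X hX]
        _ = (X * Aᵀ) * (Un * ((Unᵀ * (Aᵀ * Un)) ^ k * (Unᵀ * W))) := by
            rw [Matrix.mul_assoc]
        _ = (X * Aᵀ) * ((Aᵀ) ^ k * W) := ih W (X * Aᵀ) hX'
        _ = X * ((Aᵀ) ^ (k+1) * W) := by
            rw [Matrix.mul_assoc, ← Matrix.mul_assoc Aᵀ, ← pow_succ']
  -- assemble
  have hCt : (Ulᵀ * C * Un)ᵀ = Unᵀ * (Cᵀ * Ul) := by
    simp [Matrix.transpose_mul, Matrix.mul_assoc]
  have hQ : (Unᵀ * A * Un)ᵀ = Unᵀ * (Aᵀ * Un) := by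
    simp [Matrix.transpose_mul, Matrix.mul_assoc]
  have hY : J * (S * ((Aᵀ) ^ i * (Cᵀ * Ul))) = 0 := by
    rw [← Matrix.mul_assoc, hJS, Matrix.zero_mul]
  have hY2 : J * (A ^ j * (S * ((Aᵀ) ^ i * (Cᵀ * Ul)))) = 0 := by
    rw [← Matrix.mul_assoc, hJApow, hY]
  rw [hCt, hQ]
  simp only [Matrix.mul_assoc]
  rw [main2 i (Cᵀ * Ul) S hSJ, main1 (S * ((Aᵀ) ^ i * (Cᵀ * Ul))) hY j, hPr _ hY2]
end
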